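/- Corollary of the boundedness lemma: if ⊢^α ¬Prog(≺,X), Δ for a well-order ≺ and a finite set Δ of X-positive formulas, then ∀X ⋁ Δ[X ↦ ≺_{2^α}] is true in the standard model; in particular, taking Δ = {∀ y ∈ field(≺), y ∈ X}, if ⊢^α ¬Prog(≺,X), ∀y ∈ field(≺) (y ∈ X), then every element of the field of ≺ has rank < 2^α, so otyp(≺) ≤ 2^α. -/

import Mathlib

/-- Formulas of ω-logic in Tait normal form: closed atomic arithmetic sentences
(carrying their meaning as a `Prop`), literals `t ∈ X` / `t ∉ X` for set
variables `X` (coded by naturals) and terms evaluated to naturals, and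
conjunction, disjunction, and ω-branching universal/existential quantifiers. -/
inductive Fmla : Type
  | atom (P : Prop)
  | mem (t X : ℕ)
  | notMem (t X : ℕ)
  | and (A B : Fmla)
  | or (A B : Fmla)
  | all (A : ℕ → Fmla)
  | ex (A : ℕ → Fmla)

/-- The cut-free infinitary (ω-logic) derivability relation `⊢^α Δ` on finite
sets of formulas, with strictly decreasing ordinal tags at each rule. -/
inductive Der : Ordinal → Set Fmla → Prop
  /-- (AxM): `Δ` contains a true atomic sentence. -/
  | axM {α : Ordinal} {Δ : Set Fmla} {P : Prop} (hP : P) (hmem : Fmla.atom P ∈ Δ) :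
      Der α Δ
  /-- (AxL): `Δ` contains `s ∉ X` and `t ∈ X` where `s` and `t` denote equal numbers. -/
  | axL {α : Ordinal} {Δ : Set Fmla} {s t X : ℕ} (hst : s = t)
      (h₁ : Fmla.notMem s X ∈ Δ) (h₂ : Fmla.mem t X ∈ Δ) : Der α Δ
  /-- (∧) -/
  | and {α α₁ α₂ : Ordinal} {Δ : Set Fmla} {A₁ A₂ : Fmla}
      (h₁ : Der α₁ (insert A₁ Δ)) (h₂ : Der α₂ (insert A₂ Δ))
      (hα₁ : α₁ < α) (hα₂ : α₂ < α) (hmem : Fmla.and A₁ A₂ ∈ Δ) : Der α Δ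
  /-- (∨) -/
  | or {α α₀ : Ordinal} {Δ : Set Fmla} {A₁ A₂ : Fmla} {i : Fin 2}
      (h : Der α₀ (insert (if i = 0 then A₁ else A₂) Δ))
      (hα : α₀ < α) (hmem : Fmla.or A₁ A₂ ∈ Δ) : Der α Δ
  /-- (∀), with ω many premises -/
  | all {α : Ordinal} {β : ℕ → Ordinal} {Δ : Set Fmla} {A : ℕ → Fmla}
      (h : ∀ i, Der (β i) (insert (A i) Δ)) (hα : ∀ i, β i < α)
      (hmem : Fmla.all A ∈ Δ) : Der α Δ
  /-- (∃) -/
  | ex {α α₀ : Ordinal} {Δ : Set Fmla} {A : ℕ → Fmla} {i : ℕ}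
      (h : Der α₀ (insert (A i) Δ)) (hα : α₀ < α) (hmem : Fmla.ex A ∈ Δ) : Der α Δ

/-- Truth of a formula in the standard model `(ℕ, 𝒫(ℕ))` under an assignment
`ρ` of subsets of `ℕ` to the set variables. -/
def Val (ρ : ℕ → Set ℕ) : Fmla → Prop
  | .atom P => P
  | .mem t X => t ∈ ρ X
  | .notMem t X => t ∉ ρ X
  | .and A B => Val ρ A ∧ Val ρ B
  | .or A B => Val ρ A ∨ Val ρ B
  | .all A => ∀ i, Val ρ (A i)
  | .ex A => ∃ i, Val ρ (A i)

/-- A formula is `X`-positive if it has no occurrence of a literal `t ∉ X`. -/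
def XPos : Fmla → Prop
  | .atom _ => True
  | .mem _ _ => True
  | .notMem _ _ => False
  | .and A B => XPos A ∧ XPos B
  | .or A B => XPos A ∧ XPos B
  | .all A => ∀ i, XPos (A i)
  | .ex A => ∀ i, XPos (A i)

/-- `A[X ↦ ψ]`: replace each literal `t ∈ X` by the atomic assertion `ψ t`. -/
def substX (ψ : ℕ → Prop) : Fmla → Fmla
  | .atom P => .atom P
  | .mem t _ => .atom (ψ t)
  | .notMem t X => .notMem t X
  | .and A B => .and (substX ψ A) (substX ψ B)
  | .or A B => .or (substX ψ A) (substX ψ B)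
  | .all A => .all fun i => substX ψ (A i)
  | .ex A => .ex fun i => substX ψ (A i)

/-- The field of a binary relation on `ℕ`. -/
def rfield (r : ℕ → ℕ → Prop) : Set ℕ := {x | ∃ y, r x y ∨ r y x}

/-- The Tait normal form of `¬Prog(≺, X)`, with `X` the set variable `0`:
`∃x ((x ∈ field(≺) ∧ ∀y (¬ y ≺ x ∨ y ∈ X)) ∧ x ∉ X)`. -/
def negProg (r : ℕ → ℕ → Prop) : Fmla :=
  .ex fun x =>
    .and (.and (.atom (x ∈ rfield r)) (.all fun y => .or (.atom (¬ r y x)) (.mem y 0)))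
      (.notMem x 0)

/-- The matrix of `TI(≺)`: `¬Prog(≺, X) ∨ ∀x (x ∉ field(≺) ∨ x ∈ X)`. -/
def TIFmla (r : ℕ → ℕ → Prop) : Fmla :=
  .or (negProg r) (.all fun x => .or (.atom (x ∉ rfield r)) (.mem x 0))

/-- `∀ y ∈ field(≺), y ∈ X` in Tait form. -/
def allFieldFmla (r : ℕ → ℕ → Prop) : Fmla :=
  .all fun x => .or (.atom (x ∉ rfield r)) (.mem x 0)

section Aux

variable {r : ℕ → ℕ → Prop}

/-- Monotonicity of positive formulas in the substituted predicate. -/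
lemma val_mono {ψ ψ' : ℕ → Prop} (h : ∀ t, ψ t → ψ' t) :
    ∀ {A : Fmla}, XPos A → ∀ {ρ : ℕ → Set ℕ}, Val ρ (substX ψ A) → Val ρ (substX ψ' A) := by
  intro A
  induction A with
  | atom P => intro _ ρ hv; exact hv
  | mem t X => intro _ ρ hv; exact h t hv
  | notMem t X => intro hp; exact absurd hp id
  | and A B ihA ihB =>
      intro hp ρ hv; exact ⟨ihA hp.1 hv.1, ihB hp.2 hv.2⟩
  | or A B ihA ihB =>
      intro hp ρ hv
      rcases hv with hv | hv
      · exact Or.inl (ihA hp.1 hv)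
      · exact Or.inr (ihB hp.2 hv)
  | all A ih => intro hp ρ hv i; exact ih i (hp i) (hv i)
  | ex A ih =>
      intro hp ρ hv
      rcases hv with ⟨i, hv⟩
      exact ⟨i, ih i (hp i) hv⟩

/-- The instances of the existential quantifier in `negProg`. -/
def C1 (r : ℕ → ℕ → Prop) (n : ℕ) : Fmla :=
  .and (.and (.atom (n ∈ rfield r)) (.all fun y => .or (.atom (¬ r y n)) (.mem y 0)))
    (.notMem n 0)

/-- The invariant class of formulas for the boundedness induction. -/
def OKf (r : ℕ → ℕ → Prop) (A : Fmla) : Prop :=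
  XPos A ∨ A = negProg r ∨ (∃ n, A = C1 r n) ∨ ∃ s, A = .notMem s 0

lemma two_opow_pos (α : Ordinal) : 0 < (2 : Ordinal) ^ α :=
  Ordinal.opow_pos _ (by norm_num)

lemma two_opow_mono {α₁ α : Ordinal} (h : α₁ ≤ α) : (2 : Ordinal) ^ α₁ ≤ 2 ^ α :=
  Ordinal.opow_le_opow_right (by norm_num) h

lemma two_opow_add_le {α₁ α₂ α : Ordinal} (h₁ : α₁ < α) (h₂ : α₂ < α) :
    (2 : Ordinal) ^ α₁ + 2 ^ α₂ ≤ 2 ^ α := by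
  set m := max α₁ α₂ with hm
  have hmα : Order.succ m ≤ α := Order.succ_le_of_lt (max_lt h₁ h₂)
  have h1 : (2 : Ordinal) ^ α₁ + 2 ^ α₂ ≤ 2 ^ m + 2 ^ m :=
    add_le_add (two_opow_mono (le_max_left _ _)) (two_opow_mono (le_max_right _ _))
  have h2 : (2 : Ordinal) ^ m + 2 ^ m = 2 ^ Order.succ m := by
    rw [Ordinal.opow_succ]
    have : (2 : Ordinal) = 1 + 1 := by norm_num
    rw [this, mul_add, mul_one]
  exact h1.trans (h2 ▸ two_opow_mono hmα)

lemma rank_le_of_lt (hwf : WellFounded r) {n : ℕ} {β : Ordinal}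
    (h : ∀ y, r y n → (hwf.apply y).rank < β) : (hwf.apply n).rank ≤ β := by
  rw [Acc.rank_eq]
  exact Ordinal.iSup_le fun b => Order.succ_le_of_lt (h b.1 b.2)

lemma XPos_C2 (r : ℕ → ℕ → Prop) (n : ℕ) :
    XPos (.and (.atom (n ∈ rfield r)) (.all fun y => .or (.atom (¬ r y n)) (.mem y 0))) :=
  ⟨trivial, fun _ => ⟨trivial, trivial⟩⟩

lemma not_XPos_C1 (r : ℕ → ℕ → Prop) (n : ℕ) : ¬ XPos (C1 r n) := fun h => h.2

lemma not_XPos_negProg (r : ℕ → ℕ → Prop) : ¬ XPos (negProg r) := fun h => (h 0).2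

lemma notMem_ne_of_XPos {A : Fmla} (h : XPos A) (s X : ℕ) : Fmla.notMem s X ≠ A :=
  fun he => by rw [← he] at h; exact h

/-- The main boundedness induction. -/
lemma boundedness_main (hwf : WellFounded r) {α : Ordinal} {Γ : Set Fmla} (hd : Der α Γ) :
    (∀ A ∈ Γ, OKf r A) → ∀ γ : Ordinal, (∀ s, Fmla.notMem s 0 ∈ Γ → (hwf.apply s).rank ≤ γ) →
    ∃ A ∈ Γ, XPos A ∧ ∀ ρ : ℕ → Set ℕ,
      Val ρ (substX (fun t => (hwf.apply t).rank < γ + 2 ^ α) A) := by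
  induction hd with
  | @axM α Δ P hP hmem =>
      intro _ γ _
      exact ⟨_, hmem, trivial, fun ρ => hP⟩
  | @axL α Δ s t X hst h₁ h₂ =>
      intro hok γ hlit
      rcases hok _ h₁ with hp | he | ⟨n, he⟩ | ⟨s', he⟩
      · exact absurd hp id
      · exact absurd he (by simp [negProg])
      · exact absurd he (by simp [C1])
      · obtain ⟨rfl, rfl⟩ : s = s' ∧ X = 0 := by
          injection he with h1 h2; exact ⟨h1, h2⟩
        refine ⟨_, h₂, trivial, fun ρ => ?_⟩
        show (hwf.apply t).rank < γ + 2 ^ α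
        calc (hwf.apply t).rank = (hwf.apply s).rank := by rw [hst]
          _ ≤ γ := hlit s h₁
          _ < γ + 2 ^ α := lt_of_lt_of_le (lt_add_of_pos_right γ (two_opow_pos α)) le_rfl
  | @and α α₁ α₂ Δ A₁ A₂ h₁ h₂ hα₁ hα₂ hmem ih₁ ih₂ =>
      intro hok γ hlit
      rcases hok _ hmem with hp | he | ⟨n, he⟩ | ⟨s', he⟩
      · -- positive conjunction
        rcases ih₁ (fun A hA => hA.elim (fun h => h ▸ Or.inl hp.1) (hok A)) γ
            (fun s hs => hlit s (hs.resolve_left (notMem_ne_of_XPos hp.1 s 0))) with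
          ⟨B, hB, hBp, hBv⟩
        rcases hB with rfl | hB
        · rcases ih₂ (fun A hA => hA.elim (fun h => h ▸ Or.inl hp.2) (hok A)) γ
              (fun s hs => hlit s (hs.resolve_left (notMem_ne_of_XPos hp.2 s 0))) with
            ⟨B', hB', hB'p, hB'v⟩
          rcases hB' with rfl | hB'
          · refine ⟨_, hmem, hp, fun ρ => ?_⟩
            exact ⟨val_mono (fun t ht => ht.trans_le
                (add_le_add_right (two_opow_mono hα₁.le) γ)) hp.1 (hBv ρ),
              val_mono (fun t ht => ht.trans_le
                (add_le_add_right (two_opow_mono hα₂.le) γ)) hp.2 (hB'v ρ)⟩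
          · exact ⟨B', hB', hB'p, fun ρ => val_mono (fun t ht => ht.trans_le
              (add_le_add_right (two_opow_mono hα₂.le) γ)) hB'p (hB'v ρ)⟩
        · exact ⟨B, hB, hBp, fun ρ => val_mono (fun t ht => ht.trans_le
            (add_le_add_right (two_opow_mono hα₁.le) γ)) hBp (hBv ρ)⟩
      · exact absurd he (by simp [negProg])
      · -- the conjunction is C1 n
        obtain ⟨rfl, rfl⟩ : A₁ = .and (.atom (n ∈ rfield r))
              (.all fun y => .or (.atom (¬ r y n)) (.mem y 0)) ∧ A₂ = .notMem n 0 := by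
          rw [C1] at he; injection he with h1 h2; exact ⟨h1, h2⟩
        have hposC2 := XPos_C2 r n
        rcases ih₁ (fun A hA => hA.elim (fun h => h ▸ Or.inl hposC2) (hok A)) γ
            (fun s hs => hlit s (hs.resolve_left (notMem_ne_of_XPos hposC2 s 0))) with
          ⟨B, hB, hBp, hBv⟩
        rcases hB with rfl | hB
        · -- the witness is C2 n : we learn rank n ≤ γ + 2^α₁
          have hval := hBv (fun _ => ∅)
          have hrank : (hwf.apply n).rank ≤ γ + 2 ^ α₁ := by
            refine rank_le_of_lt hwf fun y hy => ?_
            rcases hval.2 y with h | h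
            · exact absurd hy h
            · exact h
          -- now use the second premise with γ' = γ + 2^α₁
          rcases ih₂ (fun A hA => hA.elim
                (fun h => h ▸ Or.inr (Or.inr (Or.inr ⟨n, rfl⟩))) (hok A))
              (γ + 2 ^ α₁) (fun s hs => by
                rcases hs with hs | hs
                · injection hs with h1 _; exact h1 ▸ hrank
                · exact (hlit s hs).trans (le_self_add)) with
            ⟨B', hB', hB'p, hB'v⟩
          rcases hB' with rfl | hB'
          · exact absurd hB'p id
          · refine ⟨B', hB', hB'p, fun ρ => ?_⟩
            refine val_mono (fun t ht => ht.trans_le ?_) hB'p (hB'v ρ)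
            rw [add_assoc]
            exact add_le_add_right (two_opow_add_le hα₁ hα₂) γ
        · exact ⟨B, hB, hBp, fun ρ => val_mono (fun t ht => ht.trans_le
            (add_le_add_right (two_opow_mono hα₁.le) γ)) hBp (hBv ρ)⟩
      · exact absurd he (by simp)
  | @or α α₀ Δ A₁ A₂ i h hα hmem ih =>
      intro hok γ hlit
      have hp : XPos (Fmla.or A₁ A₂) := by
        rcases hok _ hmem with hp | he | ⟨n, he⟩ | ⟨s', he⟩
        · exact hp
        · exact absurd he (by simp [negProg])
        · exact absurd he (by simp [C1])
        · exact absurd he (by simp)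
      have hpi : XPos (if i = 0 then A₁ else A₂) := by
        split
        · exact hp.1
        · exact hp.2
      rcases ih (fun A hA => hA.elim (fun h => h ▸ Or.inl hpi) (hok A)) γ
          (fun s hs => hlit s (hs.resolve_left (notMem_ne_of_XPos hpi s 0))) with
        ⟨B, hB, hBp, hBv⟩
      rcases hB with rfl | hB
      · refine ⟨_, hmem, hp, fun ρ => ?_⟩
        have hv := val_mono (fun t ht => ht.trans_le
          (add_le_add_right (two_opow_mono hα.le) γ)) hBp (hBv ρ)
        by_cases hi : i = 0
        · rw [if_pos hi] at hv; exact Or.inl hv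
        · rw [if_neg hi] at hv; exact Or.inr hv
      · exact ⟨B, hB, hBp, fun ρ => val_mono (fun t ht => ht.trans_le
          (add_le_add_right (two_opow_mono hα.le) γ)) hBp (hBv ρ)⟩
  | @all α β Δ A h hα hmem ih =>
      intro hok γ hlit
      have hp : XPos (Fmla.all A) := by
        rcases hok _ hmem with hp | he | ⟨n, he⟩ | ⟨s', he⟩
        · exact hp
        · exact absurd he (by simp [negProg])
        · exact absurd he (by simp [C1])
        · exact absurd he (by simp)
      by_cases hc : ∃ B ∈ Δ, XPos B ∧ ∀ ρ : ℕ → Set ℕ,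
          Val ρ (substX (fun t => (hwf.apply t).rank < γ + 2 ^ α) B)
      · exact hc
      · refine ⟨_, hmem, hp, fun ρ i => ?_⟩
        rcases ih i (fun B hB => hB.elim (fun h => h ▸ Or.inl (hp i)) (hok B)) γ
            (fun s hs => hlit s (hs.resolve_left (notMem_ne_of_XPos (hp i) s 0))) with
          ⟨B, hB, hBp, hBv⟩
        rcases hB with rfl | hB
        · exact val_mono (fun t ht => ht.trans_le
            (add_le_add_right (two_opow_mono (hα i).le) γ)) hBp (hBv ρ)
        · exact absurd ⟨B, hB, hBp, fun ρ => val_mono (fun t ht => ht.trans_le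
            (add_le_add_right (two_opow_mono (hα i).le) γ)) hBp (hBv ρ)⟩ hc
  | @ex α α₀ Δ A i h hα hmem ih =>
      intro hok γ hlit
      rcases hok _ hmem with hp | he | ⟨n, he⟩ | ⟨s', he⟩
      · -- positive existential
        rcases ih (fun B hB => hB.elim (fun h => h ▸ Or.inl (hp i)) (hok B)) γ
            (fun s hs => hlit s (hs.resolve_left (notMem_ne_of_XPos (hp i) s 0))) with
          ⟨B, hB, hBp, hBv⟩
        rcases hB with rfl | hB
        · refine ⟨_, hmem, hp, fun ρ => ⟨i, ?_⟩⟩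
          exact val_mono (fun t ht => ht.trans_le
            (add_le_add_right (two_opow_mono hα.le) γ)) hBp (hBv ρ)
        · exact ⟨B, hB, hBp, fun ρ => val_mono (fun t ht => ht.trans_le
            (add_le_add_right (two_opow_mono hα.le) γ)) hBp (hBv ρ)⟩
      · -- ex is negProg : the instance is C1 i
        have hAi : A i = C1 r i := by
          rw [negProg] at he; injection he with h1; exact h1 ▸ rfl
        rcases ih (fun B hB => hB.elim
              (fun h => h ▸ hAi ▸ Or.inr (Or.inr (Or.inl ⟨i, rfl⟩))) (hok B)) γ
            (fun s hs => hlit s (hs.resolve_left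
              (fun h => by rw [hAi, C1] at h; exact Fmla.noConfusion h))) with
          ⟨B, hB, hBp, hBv⟩
        rcases hB with rfl | hB
        · exact absurd hBp (hAi ▸ not_XPos_C1 r i)
        · exact ⟨B, hB, hBp, fun ρ => val_mono (fun t ht => ht.trans_le
            (add_le_add_right (two_opow_mono hα.le) γ)) hBp (hBv ρ)⟩
      · exact absurd he (by simp [C1])
      · exact absurd he (by simp)

end Aux

set_option linter.deprecated false

/-- Corollary of the boundedness lemma: if `⊢^α ¬Prog(≺,X), Δ` for a finite
set `Δ` of `X`-positive formulas then `∀X ⋁Δ[X ↦ ≺_{2^α}]` is true in the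
standard model; in particular, if `⊢^α ¬Prog(≺,X), ∀y ∈ field(≺) (y ∈ X)`,
then every element of the field of `≺` has rank `< 2^α`, whence
`otyp(≺) ≤ 2^α`. -/
theorem boundedness_corollary (r : ℕ → ℕ → Prop) (hwf : WellFounded r)
    (htrans : ∀ x y z, r x y → r y z → r x z)
    (htri : ∀ x ∈ rfield r, ∀ y ∈ rfield r, r x y ∨ x = y ∨ r y x)
    (α : Ordinal) (Δ : Set Fmla) (hfin : Δ.Finite) (hpos : ∀ A ∈ Δ, XPos A)
    (hder : Der α ({negProg r} ∪ Δ))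
    (hder2 : Der α {negProg r, allFieldFmla r}) :
    (∀ ρ : ℕ → Set ℕ, ∃ A ∈ Δ,
        Val ρ (substX (fun t => (hwf.apply t).rank < 2 ^ α) A)) ∧
    (∀ k ∈ rfield r, (hwf.apply k).rank < 2 ^ α) ∧
    (⨆ k : rfield r, Order.succ ((hwf.apply k.1).rank)) ≤ 2 ^ α := by
  classical
  have hok : ∀ A ∈ ({negProg r} ∪ Δ : Set Fmla), OKf r A := by
    intro A hA
    rcases hA with hA | hA
    · exact Or.inr (Or.inl (Set.mem_singleton_iff.mp hA))
    · exact Or.inl (hpos A hA)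
  have hlit : ∀ s, Fmla.notMem s 0 ∈ ({negProg r} ∪ Δ : Set Fmla) → (hwf.apply s).rank ≤ 0 := by
    intro s hs
    rcases hs with hs | hs
    · exact absurd (Set.mem_singleton_iff.mp hs) (by simp [negProg])
    · exact absurd (hpos _ hs) id
  obtain ⟨A, hA, hAp, hAv⟩ := boundedness_main hwf hder hok 0 hlit
  have hAΔ : A ∈ Δ := by
    rcases hA with hA | hA
    · rw [Set.mem_singleton_iff] at hA
      exact absurd hAp (hA ▸ not_XPos_negProg r)
    · exact hA
  have part1 : ∀ ρ : ℕ → Set ℕ, ∃ A ∈ Δ, Val ρ (substX (fun t => (hwf.apply t).rank < 2 ^ α) A) := by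
    intro ρ
    refine ⟨A, hAΔ, ?_⟩
    have h := hAv ρ
    rwa [zero_add] at h
  have hok2 : ∀ A ∈ ({negProg r, allFieldFmla r} : Set Fmla), OKf r A := by
    intro A hA
    rcases Set.mem_insert_iff.mp hA with hA | hA
    · exact Or.inr (Or.inl hA)
    · rw [Set.mem_singleton_iff] at hA
      exact Or.inl (hA ▸ (fun i => ⟨trivial, trivial⟩ : XPos (allFieldFmla r)))
  have hlit2 : ∀ s, Fmla.notMem s 0 ∈ ({negProg r, allFieldFmla r} : Set Fmla) →
      (hwf.apply s).rank ≤ 0 := by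
    intro s hs
    rcases Set.mem_insert_iff.mp hs with hs | hs
    · exact absurd hs (by simp [negProg])
    · exact absurd (Set.mem_singleton_iff.mp hs) (by simp [allFieldFmla])
  obtain ⟨B, hB, hBp, hBv⟩ := boundedness_main hwf hder2 hok2 0 hlit2
  have hBall : B = allFieldFmla r := by
    rcases Set.mem_insert_iff.mp hB with hB | hB
    · exact absurd hBp (hB ▸ not_XPos_negProg r)
    · exact Set.mem_singleton_iff.mp hB
  have part2 : ∀ k ∈ rfield r, (hwf.apply k).rank < 2 ^ α := by
    intro k hk
    have h := hBv (fun _ => ∅)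
    rw [hBall] at h
    simp only [allFieldFmla, substX, Val] at h
    rcases h k with h | h
    · exact absurd hk h
    · rwa [zero_add] at h
  refine ⟨part1, part2, ?_⟩
  exact Ordinal.iSup_le fun k => Order.succ_le_of_lt (part2 k.1 k.2)
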